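/- arXiv:1704.04704 — 2 statements merged into one kernel-verified Lean document; each statement's English description precedes it below -/
import Mathlib

section
/- Let X = H + X^⊥ where H ∈ g and X^⊥ ∈ T (T a commutative subalgebra), and suppose e^X = e^{X^⊥}. Then H = e^{X^⊥} H e^{-X^⊥}, i.e., H commutes with e^{X^⊥}. -/
open Matrix

noncomputable section

open NormedSpace

theorem commute_exp_of_exp_add_eq_exp {𝔸 : Type*} [Ring 𝔸] [Algebra ℚ 𝔸] [TopologicalSpace 𝔸]
    [IsTopologicalRing 𝔸] [T2Space 𝔸] {a b : 𝔸} (h : exp (a + b) = exp b) :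
    Commute a (exp b) := by
  have hab : Commute (a + b) (exp b) := h ▸ (Commute.refl _).exp_right
  simpa using hab.sub_left (Commute.refl b).exp_right

theorem Matrix.exp_mul_exp_neg {m 𝔸 : Type*} [Fintype m] [DecidableEq m] [NormedRing 𝔸]
    [NormedAlgebra ℚ 𝔸] [CompleteSpace 𝔸] (A : Matrix m m 𝔸) : exp A * exp (-A) = 1 := by
  rw [← exp_add_of_commute _ _ (Commute.refl A).neg_right, add_neg_cancel, exp_zero]

theorem H_conjugation_invariant_general {d : ℕ}
    (H Xperp : Matrix (Fin d) (Fin d) ℂ)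
    (hexp : NormedSpace.exp (H + Xperp) = NormedSpace.exp Xperp) :
    H = NormedSpace.exp Xperp * H * NormedSpace.exp (-Xperp) ∧
      H * NormedSpace.exp Xperp = NormedSpace.exp Xperp * H := by
  have hcomm : Commute H (exp Xperp) := commute_exp_of_exp_add_eq_exp hexp
  refine ⟨?_, hcomm.eq⟩
  rw [← hcomm.eq, mul_assoc, exp_mul_exp_neg, mul_one]

/-- Let `X = H + X^⊥` with `X^⊥` in a commutative subalgebra `T` of the matrix
Lie algebra, and suppose `e^X = e^{X^⊥}`. Then `H = e^{X^⊥} H e^{-X^⊥}`;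
i.e. `H` commutes with `e^{X^⊥}`. -/
theorem H_conjugation_invariant {d : ℕ}
    (T : Submodule ℝ (Matrix (Fin d) (Fin d) ℂ))
    (hTcomm : ∀ S ∈ T, ∀ S' ∈ T, S * S' = S' * S)
    (H Xperp : Matrix (Fin d) (Fin d) ℂ) (hXperp : Xperp ∈ T)
    (hexp : NormedSpace.exp (H + Xperp) = NormedSpace.exp Xperp) :
    H = NormedSpace.exp Xperp * H * NormedSpace.exp (-Xperp) ∧
      H * NormedSpace.exp Xperp = NormedSpace.exp Xperp * H :=
  H_conjugation_invariant_general H Xperp hexp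
end
end

section
/- With X₁ = [[0,1],[-1,0]], Y₁ = [[0,i],[i,0]], T₁ = diag(-i,i) in su(2) and real a₁, b₁, m with a₁² + b₁² + m²π² = n²π² for some integer n with m ≤ n and m, n of equal parity, and R₁ = 2T₁: the curve γ(t) = e^{t(a₁X₁ + b₁Y₁ + (m/2)πR₁)} e^{-t(m/2)πR₁} satisfies γ(0) = γ(1) = I. -/
open Matrix

noncomputable section

def T1 : Matrix (Fin 2) (Fin 2) ℂ := !![-Complex.I, 0; 0, Complex.I]
def X1 : Matrix (Fin 2) (Fin 2) ℂ := !![0, 1; -1, 0]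
def Y1 : Matrix (Fin 2) (Fin 2) ℂ := !![0, Complex.I; Complex.I, 0]
def R1 : Matrix (Fin 2) (Fin 2) ℂ := (2 : ℂ) • T1

/-! An element `A` of `su(2)` squares to `-|A|² • 1`, so splitting the exponential series into
even and odd terms gives `exp A = cos |A| • 1 + (sin |A| / |A|) • A`. Under the hypothesis the
generator `a₁X₁ + b₁Y₁ + (m/2)πR₁` has norm `|n|π` and `(m/2)πR₁` has norm `|m|π`, so the two
exponentials are `(-1)ⁿ • 1` and `(-1)ᵐ • 1`, whose product is `1` because `m ≡ n (mod 2)`. -/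

section RealAlgebra

variable {𝔸 : Type*} [Ring 𝔸] [Algebra ℝ 𝔸] [TopologicalSpace 𝔸] [IsTopologicalRing 𝔸]
  [T2Space 𝔸] [ContinuousSMul ℝ 𝔸]

theorem exp_eq_cos_smul_one_add_sin_div_smul_of_mul_self {A : 𝔸} {θ : ℝ} (hθ : θ ≠ 0)
    (hA : A * A = (-θ ^ 2) • 1) :
    NormedSpace.exp A = Real.cos θ • 1 + (Real.sin θ / θ) • A := by
  have hpow (k : ℕ) : A ^ (2 * k) = ((-θ ^ 2) ^ k) • 1 := by
    rw [pow_mul, sq, hA, smul_pow, one_pow]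
  rw [NormedSpace.exp_eq_tsum ℝ]
  refine HasSum.tsum_eq (HasSum.even_add_odd ?_ ?_)
  · convert (Real.hasSum_cos θ).smul_const (1 : 𝔸) using 2 with k
    rw [hpow, smul_smul]
    congr 1
    field_simp
    ring
  · convert ((Real.hasSum_sin θ).div_const θ).smul_const A using 2 with k
    rw [pow_succ, hpow, smul_mul_assoc, one_mul, smul_smul]
    congr 1
    field_simp
    ring

theorem exp_eq_neg_one_zpow_smul_one_of_mul_self {A : 𝔸} {k : ℤ} (hk : k ≠ 0)
    (hA : A * A = (-(k * Real.pi) ^ 2) • 1) :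
    NormedSpace.exp A = ((-1 : ℝ) ^ k) • 1 := by
  have hθ : (k : ℝ) * Real.pi ≠ 0 := mul_ne_zero (Int.cast_ne_zero.mpr hk) Real.pi_ne_zero
  rw [exp_eq_cos_smul_one_add_sin_div_smul_of_mul_self hθ hA, Real.cos_int_mul_pi,
    Real.sin_int_mul_pi, zero_div, zero_smul, add_zero]

end RealAlgebra

theorem smul_X1_add_smul_Y1_add_smul_R1_mul_self (a b c : ℝ) :
    (a • X1 + b • Y1 + c • R1) * (a • X1 + b • Y1 + c • R1) =
      (-(a ^ 2 + b ^ 2 + 4 * c ^ 2)) • (1 : Matrix (Fin 2) (Fin 2) ℂ) := by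
  ext i j
  fin_cases i <;> fin_cases j <;>
    simp [X1, Y1, R1, T1, Matrix.mul_apply, Fin.sum_univ_two, Complex.real_smul] <;>
    ring_nf <;> rw [Complex.I_sq] <;> ring

theorem exp_smul_X1_add_smul_Y1_add_smul_R1 {a b c : ℝ} {k : ℤ}
    (h : a ^ 2 + b ^ 2 + 4 * c ^ 2 = (k * Real.pi) ^ 2) :
    NormedSpace.exp (a • X1 + b • Y1 + c • R1) = ((-1 : ℝ) ^ k) • 1 := by
  rcases eq_or_ne k 0 with rfl | hk
  · rw [Int.cast_zero, zero_mul, zero_pow two_ne_zero] at h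
    have ha : a = 0 := by nlinarith [sq_nonneg b, sq_nonneg c]
    have hb : b = 0 := by nlinarith [sq_nonneg a, sq_nonneg c]
    have hc : c = 0 := by nlinarith [sq_nonneg a, sq_nonneg b]
    simp [ha, hb, hc]
  · refine exp_eq_neg_one_zpow_smul_one_of_mul_self hk ?_
    rw [smul_X1_add_smul_Y1_add_smul_R1_mul_self, h]

theorem su2_subriemannian_loop_closes_general (a₁ b₁ : ℝ) (m n : ℤ)
    (hpar : m % 2 = n % 2)
    (h : a₁ ^ 2 + b₁ ^ 2 + (m : ℝ) ^ 2 * Real.pi ^ 2 = (n : ℝ) ^ 2 * Real.pi ^ 2) :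
    (NormedSpace.exp ((0 : ℝ) • (a₁ • X1 + b₁ • Y1 + ((m : ℝ) / 2 * Real.pi) • R1)) *
        NormedSpace.exp (-((0 : ℝ) • (((m : ℝ) / 2 * Real.pi) • R1))) = 1) ∧
    (NormedSpace.exp ((1 : ℝ) • (a₁ • X1 + b₁ • Y1 + ((m : ℝ) / 2 * Real.pi) • R1)) *
        NormedSpace.exp (-((1 : ℝ) • (((m : ℝ) / 2 * Real.pi) • R1))) = 1) := by
  refine ⟨by simp, ?_⟩
  rw [one_smul, one_smul]
  have hM : NormedSpace.exp (a₁ • X1 + b₁ • Y1 + ((m : ℝ) / 2 * Real.pi) • R1) =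
      ((-1 : ℝ) ^ n) • 1 :=
    exp_smul_X1_add_smul_Y1_add_smul_R1 (by linear_combination h)
  have hB : NormedSpace.exp (-(((m : ℝ) / 2 * Real.pi) • R1)) = ((-1 : ℝ) ^ m) • 1 := by
    simpa [neg_smul] using
      exp_smul_X1_add_smul_Y1_add_smul_R1 (a := 0) (b := 0) (c := -((m : ℝ) / 2 * Real.pi))
        (k := m) (by ring)
  have hsum : Even (n + m) := Int.even_iff.mpr (by omega)
  rw [hM, hB, smul_mul_smul, one_mul, ← zpow_add₀ (by norm_num), hsum.neg_one_zpow, one_smul]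

/-- If `a₁² + b₁² + m²π² = n²π²` with integers `m ≤ n` of equal parity, then
`γ(t) = e^{t(a₁X₁ + b₁Y₁ + (m/2)πR₁)} e^{-t(m/2)πR₁}` satisfies
`γ(0) = γ(1) = I`. -/
theorem su2_subriemannian_loop_closes (a₁ b₁ : ℝ) (m n : ℤ)
    (hmn : m ≤ n) (hpar : m % 2 = n % 2)
    (h : a₁ ^ 2 + b₁ ^ 2 + (m : ℝ) ^ 2 * Real.pi ^ 2 = (n : ℝ) ^ 2 * Real.pi ^ 2) :
    (NormedSpace.exp ((0 : ℝ) • (a₁ • X1 + b₁ • Y1 + ((m : ℝ) / 2 * Real.pi) • R1)) *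
        NormedSpace.exp (-((0 : ℝ) • (((m : ℝ) / 2 * Real.pi) • R1))) = 1) ∧
    (NormedSpace.exp ((1 : ℝ) • (a₁ • X1 + b₁ • Y1 + ((m : ℝ) / 2 * Real.pi) • R1)) *
        NormedSpace.exp (-((1 : ℝ) • (((m : ℝ) / 2 * Real.pi) • R1))) = 1) :=
  su2_subriemannian_loop_closes_general a₁ b₁ m n hpar h
end
end
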